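/- arXiv:2411.06717 — 3 statements merged into one kernel-verified Lean document; each statement's English description precedes it below -/
import Mathlib

section
/- Let X be a ball Banach function space on ℝⁿ such that the Hardy–Littlewood maximal operator M is bounded on X. Then there exists a constant C > 0 such that for every ball B ⊂ ℝⁿ, ‖χ_B‖_X · ‖χ_B‖_{X′} ≤ C |B|, and consequently ‖χ_B‖_X · ‖χ_B‖_{X′} ≈ |B|. -/
open MeasureTheory ENNReal Filter Topology

noncomputable section

abbrev Rn (n : ℕ) := Fin n → ℝ

/-- A ball Banach function space on ℝⁿ, modelled via its norm functional. -/
structure BBFS (n : ℕ) where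
  N : (Rn n → ℝ) → ℝ≥0∞
  zero_iff : ∀ f : Rn n → ℝ, N f = 0 ↔ f =ᵐ[(volume : Measure (Rn n))] 0
  mono : ∀ f g : Rn n → ℝ,
    (∀ᵐ x ∂(volume : Measure (Rn n)), |g x| ≤ |f x|) → N g ≤ N f
  add_le : ∀ f g : Rn n → ℝ, N (f + g) ≤ N f + N g
  smul_eq : ∀ (c : ℝ) (f : Rn n → ℝ), N (c • f) = ENNReal.ofReal |c| * N f
  fatou : ∀ (f : ℕ → Rn n → ℝ) (F : Rn n → ℝ),
    (∀ m, ∀ᵐ x ∂(volume : Measure (Rn n)), 0 ≤ f m x ∧ f m x ≤ f (m + 1) x) →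
    (∀ᵐ x ∂(volume : Measure (Rn n)), Tendsto (fun m => f m x) atTop (𝓝 (F x))) →
    N F = ⨆ m, N (f m)
  ball_lt_top : ∀ (x : Rn n) (r : ℝ), 0 < r →
    N ((Metric.ball x r).indicator (fun _ => (1 : ℝ))) < ⊤
  locL1 : ∀ (x : Rn n) (r : ℝ), 0 < r → ∃ C : ℝ≥0∞, C < ⊤ ∧
    ∀ f : Rn n → ℝ, ∫⁻ y in Metric.ball x r, ‖f y‖₊ ∂(volume) ≤ C * N f

/-- The associate (Köthe dual) norm of a ball Banach function space. -/
def BBFS.dualNorm {n : ℕ} (X : BBFS n) (f : Rn n → ℝ) : ℝ≥0∞ :=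
  ⨆ (g : Rn n → ℝ) (_ : X.N g = 1),
    ∫⁻ x, ‖f x * g x‖₊ ∂(volume : Measure (Rn n))

/-- The (uncentered) Hardy–Littlewood maximal function, ℝ≥0∞-valued. -/
def maximalE (n : ℕ) (f : Rn n → ℝ) (x : Rn n) : ℝ≥0∞ :=
  ⨆ (c : Rn n) (r : ℝ) (_ : 0 < r) (_ : x ∈ Metric.ball c r),
    (volume (Metric.ball c r))⁻¹ * ∫⁻ y in Metric.ball c r, ‖f y‖₊ ∂(volume)

/-- Any lower Lebesgue integral is approximated by the integrals of truncations. -/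
lemma lintegral_le_iSup_min {α : Type*} [MeasurableSpace α] (μ : Measure α) (f : α → ℝ≥0∞) :
    ∫⁻ x, f x ∂μ ≤ ⨆ k : ℕ, ∫⁻ x, min (f x) k ∂μ := by
  rw [lintegral_eq_nnreal]
  refine iSup₂_le fun φ hφ => ?_
  obtain ⟨Cφ, hC⟩ := φ.exists_forall_le
  obtain ⟨k, hk⟩ := exists_nat_ge Cφ
  refine le_trans ?_ (le_iSup _ k)
  rw [← SimpleFunc.lintegral_eq_lintegral]
  refine lintegral_mono fun x => ?_
  simp only [SimpleFunc.map_apply]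
  refine le_min (hφ x) ?_
  exact_mod_cast le_trans (hC x) hk

lemma ennnorm_min_abs (a : ℝ) (k : ℕ) :
    (‖min |a| (k : ℝ)‖₊ : ℝ≥0∞) = min (‖a‖₊ : ℝ≥0∞) k := by
  rw [← enorm_eq_nnnorm, ← enorm_eq_nnnorm, Real.enorm_eq_ofReal (le_min (abs_nonneg _) (Nat.cast_nonneg _)),
    Monotone.map_min (fun _ _ h => ENNReal.ofReal_le_ofReal h),
    ← Real.enorm_eq_ofReal (abs_nonneg a), ENNReal.ofReal_natCast]
  simp [Real.nnnorm_abs]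

/-- if the Hardy–Littlewood maximal operator is bounded on `X`,
then `‖χ_B‖_X ‖χ_B‖_{X′} ≤ C|B|`, and consequently `‖χ_B‖_X ‖χ_B‖_{X′} ≈ |B|`. -/
theorem bbfs_prod_le_measure {n : ℕ} (X : BBFS n) (C₀ : ℝ≥0∞) (hC₀ : C₀ < ⊤)
    (hM : ∀ f : Rn n → ℝ,
      X.N (fun x => (maximalE n f x).toReal) ≤ C₀ * X.N f) :
    ∃ C : ℝ≥0∞, 0 < C ∧ C < ⊤ ∧ ∀ (x : Rn n) (r : ℝ), 0 < r →
      X.N ((Metric.ball x r).indicator fun _ => (1 : ℝ)) *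
          X.dualNorm ((Metric.ball x r).indicator fun _ => (1 : ℝ)) ≤
        C * volume (Metric.ball x r) ∧
      volume (Metric.ball x r) ≤
        X.N ((Metric.ball x r).indicator fun _ => (1 : ℝ)) *
          X.dualNorm ((Metric.ball x r).indicator fun _ => (1 : ℝ)) := by
  refine ⟨C₀ + 1, by simp, ENNReal.add_lt_top.2 ⟨hC₀, one_lt_top⟩, fun x₀ r hr => ?_⟩
  set B := Metric.ball x₀ r with hB
  have hBm : MeasurableSet B := measurableSet_ball
  have hvpos : 0 < volume B := Metric.measure_ball_pos _ _ hr
  have hvlt : volume B < ⊤ := measure_ball_lt_top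
  set χ : Rn n → ℝ := B.indicator fun _ => (1 : ℝ) with hχ
  set a := X.N χ with ha
  have ha_lt : a < ⊤ := X.ball_lt_top x₀ r hr
  have ha_pos : 0 < a := by
    rcases eq_or_ne a 0 with h0 | h0
    · exfalso
      have hnull : volume {x | χ x ≠ 0} = 0 := by
        have := (X.zero_iff χ).1 h0
        simpa [Filter.EventuallyEq, ae_iff] using this
      have : volume B = 0 := by
        refine measure_mono_null (fun x hx => ?_) hnull
        simp [hχ, Set.indicator_of_mem hx]; exact hx
      exact absurd this hvpos.ne'
    · exact lt_of_le_of_ne zero_le (Ne.symm h0)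
  -- Key estimate for the upper bound.
  have key : ∀ g : Rn n → ℝ, X.N g = 1 →
      a * ∫⁻ x, (‖χ x * g x‖₊ : ℝ≥0∞) ∂volume ≤ C₀ * volume B := by
    intro g hg
    have hint : ∫⁻ x, (‖χ x * g x‖₊ : ℝ≥0∞) ∂volume = ∫⁻ x in B, (‖g x‖₊ : ℝ≥0∞) ∂volume := by
      rw [← lintegral_indicator hBm]
      congr 1; funext x
      by_cases hx : x ∈ B
      · simp [hχ, Set.indicator_of_mem hx]
      · simp [hχ, Set.indicator_of_notMem hx]
    rw [hint]
    have hk : ∀ k : ℕ, a * ∫⁻ x in B, min (‖g x‖₊ : ℝ≥0∞) k ∂volume ≤ C₀ * volume B := by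
      intro k
      set gk : Rn n → ℝ := B.indicator (fun y => min |g y| k) with hgk
      have hskn : ∀ y : Rn n, (0 : ℝ) ≤ min |g y| k := fun y =>
        le_min (abs_nonneg _) (Nat.cast_nonneg _)
      have hgk_le_g : ∀ x, |gk x| ≤ |g x| := by
        intro x
        by_cases hx : x ∈ B
        · rw [hgk, Set.indicator_of_mem hx, abs_of_nonneg (hskn x)]
          exact min_le_left _ _
        · simp [hgk, Set.indicator_of_notMem hx, abs_nonneg]
      have hNgk : X.N gk ≤ 1 := hg ▸ X.mono g gk (Filter.Eventually.of_forall hgk_le_g)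
      have hgk_bd : ∀ y, (‖gk y‖₊ : ℝ≥0∞) ≤ (k : ℝ≥0∞) := by
        intro y
        by_cases hy : y ∈ B
        · rw [hgk, Set.indicator_of_mem hy, ennnorm_min_abs]
          exact min_le_right _ _
        · simp [hgk, Set.indicator_of_notMem hy]
      set J := ∫⁻ y in B, (‖gk y‖₊ : ℝ≥0∞) ∂volume with hJ
      have hIJ : ∫⁻ x in B, min (‖g x‖₊ : ℝ≥0∞) k ∂volume = J := by
        rw [hJ]
        refine (setLIntegral_congr_fun hBm (fun y hy => ?_)).symm
        rw [hgk, Set.indicator_of_mem hy, ennnorm_min_abs]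
      have hJ_le : J ≤ (k : ℝ≥0∞) * volume B := by
        calc J ≤ ∫⁻ _ in B, (k : ℝ≥0∞) ∂volume := lintegral_mono fun y => hgk_bd y
        _ = (k : ℝ≥0∞) * volume B := setLIntegral_const _ _
      set t := (volume B)⁻¹ * J with ht
      have ht_lt : t < ⊤ :=
        ENNReal.mul_lt_top (ENNReal.inv_lt_top.2 hvpos)
          (lt_of_le_of_lt hJ_le (ENNReal.mul_lt_top (natCast_lt_top k) hvlt))
      have hlow : ∀ x ∈ B, t ≤ maximalE n gk x := by
        intro x hx
        rw [maximalE]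
        exact le_iSup_of_le x₀ (le_iSup_of_le r (le_iSup_of_le hr (le_iSup_of_le hx le_rfl)))
      have hup : ∀ x, maximalE n gk x ≤ (k : ℝ≥0∞) := by
        intro x
        rw [maximalE]
        refine iSup_le fun c' => iSup_le fun r' => iSup_le fun hr' => iSup_le fun _ => ?_
        have h1 : ∫⁻ y in Metric.ball c' r', (‖gk y‖₊ : ℝ≥0∞) ∂volume ≤
            (k : ℝ≥0∞) * volume (Metric.ball c' r') :=
          le_trans (lintegral_mono fun y => hgk_bd y) (le_of_eq (setLIntegral_const _ _))
        calc (volume (Metric.ball c' r'))⁻¹ * ∫⁻ y in Metric.ball c' r', (‖gk y‖₊ : ℝ≥0∞) ∂volume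
            ≤ (volume (Metric.ball c' r'))⁻¹ * ((k : ℝ≥0∞) * volume (Metric.ball c' r')) :=
              mul_le_mul_right h1 _
        _ = (k : ℝ≥0∞) := by
              rw [mul_comm (k : ℝ≥0∞), ← mul_assoc,
                ENNReal.inv_mul_cancel (Metric.measure_ball_pos _ _ hr').ne' measure_ball_lt_top.ne,
                one_mul]
      have hpt : ∀ x, |(t.toReal • χ) x| ≤ |(maximalE n gk x).toReal| := by
        intro x
        rw [Pi.smul_apply, smul_eq_mul]
        by_cases hx : x ∈ B
        · rw [hχ, Set.indicator_of_mem hx, mul_one,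
            abs_of_nonneg ENNReal.toReal_nonneg, abs_of_nonneg ENNReal.toReal_nonneg]
          exact ENNReal.toReal_mono (lt_of_le_of_lt (hup x) (natCast_lt_top k)).ne (hlow x hx)
        · simp [hχ, Set.indicator_of_notMem hx, abs_nonneg]
      have h1 : t * a ≤ C₀ := by
        have h2 : X.N (t.toReal • χ) ≤ X.N (fun x => (maximalE n gk x).toReal) :=
          X.mono _ _ (Filter.Eventually.of_forall hpt)
        have h3 : X.N (t.toReal • χ) = t * a := by
          rw [X.smul_eq, abs_of_nonneg ENNReal.toReal_nonneg, ENNReal.ofReal_toReal ht_lt.ne, ha]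
        calc t * a = X.N (t.toReal • χ) := h3.symm
        _ ≤ C₀ * X.N gk := le_trans h2 (hM gk)
        _ ≤ C₀ * 1 := mul_le_mul_right hNgk _
        _ = C₀ := mul_one _
      calc a * ∫⁻ x in B, min (‖g x‖₊ : ℝ≥0∞) k ∂volume = a * J := by rw [hIJ]
      _ = volume B * (t * a) := by
            rw [ht, mul_assoc (volume B)⁻¹ J a, ← mul_assoc (volume B),
              ENNReal.mul_inv_cancel hvpos.ne' hvlt.ne, one_mul, mul_comm]
      _ ≤ volume B * C₀ := mul_le_mul_right h1 _
      _ = C₀ * volume B := mul_comm _ _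
    calc a * ∫⁻ x in B, (‖g x‖₊ : ℝ≥0∞) ∂volume
        ≤ a * ⨆ k : ℕ, ∫⁻ x in B, min (‖g x‖₊ : ℝ≥0∞) k ∂volume :=
          mul_le_mul_right (lintegral_le_iSup_min _ _) a
    _ = ⨆ k : ℕ, a * ∫⁻ x in B, min (‖g x‖₊ : ℝ≥0∞) k ∂volume := by rw [ENNReal.mul_iSup]
    _ ≤ C₀ * volume B := iSup_le hk
  constructor
  · -- upper bound
    rw [BBFS.dualNorm, ENNReal.mul_iSup]
    refine iSup_le fun g => ?_
    rw [ENNReal.mul_iSup]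
    refine iSup_le fun hg => ?_
    exact le_trans (key g hg) (mul_le_mul_left le_self_add _)
  · -- lower bound
    set cR : ℝ := a.toReal⁻¹ with hcR
    have hc_nn : 0 ≤ cR := inv_nonneg.2 ENNReal.toReal_nonneg
    have hofc : ENNReal.ofReal cR = a⁻¹ := by
      rw [hcR, ENNReal.ofReal_inv_of_pos (ENNReal.toReal_pos ha_pos.ne' ha_lt.ne),
        ENNReal.ofReal_toReal ha_lt.ne]
    have hNg0 : X.N (cR • χ) = 1 := by
      rw [X.smul_eq, abs_of_nonneg hc_nn, hofc, ← ha,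
        ENNReal.inv_mul_cancel ha_pos.ne' ha_lt.ne]
    have hint : ∫⁻ x, (‖χ x * (cR • χ) x‖₊ : ℝ≥0∞) ∂volume = a⁻¹ * volume B := by
      have heq : (fun x => (‖χ x * (cR • χ) x‖₊ : ℝ≥0∞)) =
          B.indicator (fun _ => ENNReal.ofReal cR) := by
        funext x
        by_cases hx : x ∈ B
        · rw [Set.indicator_of_mem hx]
          simp [hχ, Set.indicator_of_mem hx, Real.enorm_eq_ofReal hc_nn]; exact Real.enorm_eq_ofReal hc_nn
        · simp [hχ, Set.indicator_of_notMem hx]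
      rw [heq, lintegral_indicator hBm, setLIntegral_const, hofc]
    have hd : a⁻¹ * volume B ≤ X.dualNorm χ := by
      rw [BBFS.dualNorm, ← hint]
      exact le_iSup₂_of_le (cR • χ) hNg0 le_rfl
    calc volume B = a * (a⁻¹ * volume B) := by
          rw [← mul_assoc, ENNReal.mul_inv_cancel ha_pos.ne' ha_lt.ne, one_mul]
    _ ≤ a * X.dualNorm χ := mul_le_mul_right hd a
end
end

section
/- Let M ≥ 2 be a real number, r > 0, and y, z ∈ ℝⁿ with |y − z| = M r. Suppose H : ℝⁿ → ℝ is measurable, satisfies ∫_{ℝⁿ} H(x) dx = 0, and |H(x)| ≤ r^{−n}(χ_{B(y,r)}(x) + χ_{B(z,r)}(x)) for all x. Then H belongs to the atomic Hardy space H¹(ℝⁿ) and ‖H‖_{H¹} ≤ C log M for a constant C depending only on n. -/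
open MeasureTheory ENNReal Filter Topology

noncomputable section

/-- An H¹-atom: supported in a ball `B(x,r)`, mean zero, `‖a‖_∞ ≤ r^{-n}`. -/
def IsAtom1 (n : ℕ) (a : Rn n → ℝ) : Prop :=
  ∃ (x : Rn n) (r : ℝ), 0 < r ∧
    (∀ y, y ∉ Metric.ball x r → a y = 0) ∧
    MeasureTheory.Integrable a ∧
    (∫ y, a y) = 0 ∧
    ∀ y, |a y| ≤ 1 / r ^ n

/-- An atomic representation `f = Σ λᵢ aᵢ` with atoms `aᵢ` and `(λᵢ) ∈ ℓ¹`. -/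
def HardyRep (n : ℕ) (f : Rn n → ℝ) (l : ℕ → ℝ) (a : ℕ → Rn n → ℝ) : Prop :=
  (∀ i, IsAtom1 n (a i)) ∧ Summable (fun i => |l i|) ∧
    ∀ᵐ x ∂(volume : Measure (Rn n)), HasSum (fun i => l i * a i x) (f x)

/-- Membership in the atomic Hardy space `H¹(ℝⁿ)`. -/
def MemH1 (n : ℕ) (f : Rn n → ℝ) : Prop := ∃ l a, HardyRep n f l a

/-- The atomic Hardy space norm. -/
def H1norm (n : ℕ) (f : Rn n → ℝ) : ℝ≥0∞ :=
  ⨅ (p : (ℕ → ℝ) × (ℕ → Rn n → ℝ)) (_ : HardyRep n f p.1 p.2),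
    ENNReal.ofReal (∑' i, |p.1 i|)

section H1AuxLemmas
open Metric

def volb (n : ℕ) : ℝ := (volume (Metric.ball (0 : Rn n) 1)).toReal

lemma volb_pos (n : ℕ) : 0 < volb n :=
  ENNReal.toReal_pos (measure_ball_pos _ _ one_pos).ne' measure_ball_lt_top.ne

lemma vol_ball {n : ℕ} (x : Rn n) {R : ℝ} (hR : 0 < R) :
    (volume (Metric.ball x R)).toReal = R ^ n * volb n := by
  rw [Measure.addHaar_ball_of_pos volume x hR, volb]
  simp [ENNReal.toReal_mul, ENNReal.toReal_ofReal (pow_nonneg hR.le n)]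

def nInd (n : ℕ) (w : Rn n) (R : ℝ) : Rn n → ℝ :=
  (Metric.ball w R).indicator fun _ => ((volume (Metric.ball w R)).toReal)⁻¹

lemma nInd_zero {n : ℕ} (w : Rn n) (R : ℝ) {x : Rn n} (hx : x ∉ Metric.ball w R) :
    nInd n w R x = 0 := Set.indicator_of_notMem hx _

lemma nInd_integrable (n : ℕ) (w : Rn n) (R : ℝ) : Integrable (nInd n w R) := by
  rw [nInd, integrable_indicator_iff measurableSet_ball]
  exact integrableOn_const measure_ball_lt_top.ne

lemma nInd_integral {n : ℕ} (w : Rn n) {R : ℝ} (hR : 0 < R) : ∫ x, nInd n w R x = 1 := by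
  rw [nInd, integral_indicator_const _ measurableSet_ball, smul_eq_mul]
  have hv := volb_pos n
  have h : (volume (Metric.ball w R)).toReal ≠ 0 := by
    rw [vol_ball w hR]
    exact (mul_pos (pow_pos hR n) hv).ne'
  field_simp
  rfl

lemma nInd_abs_le {n : ℕ} (w : Rn n) {R : ℝ} (hR : 0 < R) (x : Rn n) :
    |nInd n w R x| ≤ (R ^ n * volb n)⁻¹ := by
  have h := vol_ball w hR
  have h0 : (0:ℝ) ≤ (R ^ n * volb n)⁻¹ := by
    have := volb_pos n; positivity
  rw [nInd]
  by_cases hx : x ∈ Metric.ball w R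
  · rw [Set.indicator_of_mem hx, abs_of_nonneg (inv_nonneg.2 ENNReal.toReal_nonneg), h]
  · rw [Set.indicator_of_notMem hx, abs_zero]; exact h0

lemma isAtom1_smul (n : ℕ) (w : Rn n) {R : ℝ} (hR : 0 < R) (g : Rn n → ℝ) {c : ℝ} (hc : 0 < c)
    (hsupp : ∀ p, p ∉ Metric.ball w R → g p = 0) (hint : Integrable g)
    (hmean : (∫ p, g p) = 0) (hbd : ∀ p, |g p| ≤ c / R ^ n) :
    IsAtom1 n (fun x => c⁻¹ * g x) := by
  refine ⟨w, R, hR, fun p hp => by simp only [hsupp p hp, mul_zero], hint.const_mul _, ?_, ?_⟩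
  · rw [integral_const_mul, hmean, mul_zero]
  · intro p
    rw [abs_mul, abs_of_nonneg (inv_nonneg.2 hc.le)]
    have h1 : c⁻¹ * |g p| ≤ c⁻¹ * (c / R ^ n) := by
      apply mul_le_mul_of_nonneg_left (hbd p) (inv_nonneg.2 hc.le)
    have h2 : c⁻¹ * (c / R ^ n) = 1 / R ^ n := by
      field_simp
    linarith

lemma isAtom1_neg {n : ℕ} {a : Rn n → ℝ} (h : IsAtom1 n a) : IsAtom1 n (fun x => -(a x)) := by
  obtain ⟨w, R, hR, hs, hi, hm, hb⟩ := h
  exact ⟨w, R, hR, fun p hp => by simp only [hs p hp, neg_zero], hi.neg, by simp only [integral_neg, hm, neg_zero],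
    fun p => by simp only [abs_neg]; exact hb p⟩

/-- Edge atoms: `G` supported in `B(w,r)` with `|G| ≤ r^{-n}`, mean `s`,
corrected by `s` times the normalized indicator. -/
lemma isAtom1_edge (n : ℕ) (w : Rn n) {r : ℝ} (hr : 0 < r) (G : Rn n → ℝ) (s : ℝ) {c : ℝ}
    (hc : 0 < c) (hG : Integrable G) (hGsupp : ∀ p, p ∉ Metric.ball w r → G p = 0)
    (hGbd : ∀ p, |G p| ≤ 1 / r ^ n) (hGmean : (∫ p, G p) = s)
    (hcs : 1 + |s| / volb n ≤ c) :
    IsAtom1 n (fun x => c⁻¹ * (G x - s * nInd n w r x)) := by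
  have hv := volb_pos n
  have hrn : (0:ℝ) < r ^ n := pow_pos hr n
  apply isAtom1_smul n w hr _ hc
  · intro p hp
    rw [hGsupp p hp, nInd_zero w r hp, mul_zero, sub_zero]
  · exact hG.sub ((nInd_integrable n w r).const_mul s)
  · rw [integral_sub hG ((nInd_integrable n w r).const_mul s), integral_const_mul,
      nInd_integral w hr, mul_one, hGmean, sub_self]
  · intro p
    have h2 : |nInd n w r p| ≤ (r ^ n * volb n)⁻¹ := nInd_abs_le w hr p
    have h1 : |G p - s * nInd n w r p| ≤ 1 / r ^ n + |s| * (r ^ n * volb n)⁻¹ := by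
      calc |G p - s * nInd n w r p| ≤ |G p| + |s * nInd n w r p| := abs_sub _ _
        _ = |G p| + |s| * |nInd n w r p| := by rw [abs_mul]
        _ ≤ 1 / r ^ n + |s| * (r ^ n * volb n)⁻¹ := by
            have := hGbd p
            have h3 : |s| * |nInd n w r p| ≤ |s| * (r ^ n * volb n)⁻¹ := by gcongr
            linarith
    rw [mul_inv] at h1
    rw [div_eq_mul_inv] at hcs
    have h6 := mul_le_mul_of_nonneg_right hcs (inv_nonneg.2 hrn.le)
    rw [div_eq_mul_inv]
    have e : (1 + |s| * (volb n)⁻¹) * (r ^ n)⁻¹ = 1 / r ^ n + |s| * ((r ^ n)⁻¹ * (volb n)⁻¹) := by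
      ring
    linarith

/-- The common sup-norm bound for differences of normalized indicators. -/
lemma chain_bound (n : ℕ) {A v s c : ℝ} (hA : 0 < A) (hv : 0 < v)
    (hcs : |s| / v * 2 ^ (n + 1) ≤ c) {u u' : ℝ}
    (hu : |u| ≤ (A * v)⁻¹) (hu' : |u'| ≤ (A * v)⁻¹) :
    |s * (u - u')| ≤ c / (2 ^ n * A) := by
  have h1 : |s * (u - u')| ≤ |s| * (2 * (A * v)⁻¹) := by
    rw [abs_mul]
    have h0 : |u - u'| ≤ 2 * (A * v)⁻¹ := by
      calc |u - u'| ≤ |u| + |u'| := abs_sub _ _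
        _ ≤ 2 * (A * v)⁻¹ := by linarith
    exact mul_le_mul_of_nonneg_left h0 (abs_nonneg s)
  have h2 : |s| * (2 * (A * v)⁻¹) ≤ c / (2 ^ n * A) := by
    rw [le_div_iff₀ (by positivity)]
    have key : |s| * (2 * (A * v)⁻¹) * (2 ^ n * A) = |s| / v * 2 ^ (n + 1) := by
      rw [pow_succ]
      field_simp
    rw [key]
    exact hcs
  linarith

/-- Chain atoms: difference of normalized indicators of concentric balls. -/
lemma isAtom1_chain (n : ℕ) (w : Rn n) {r : ℝ} (hr : 0 < r) (s : ℝ) {c : ℝ} (hc : 0 < c)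
    (hcs : |s| / volb n * 2 ^ (n + 1) ≤ c) (k : ℕ) :
    IsAtom1 n (fun x => c⁻¹ * (s * (nInd n w (2 ^ k * r) x - nInd n w (2 ^ (k + 1) * r) x))) := by
  have hv := volb_pos n
  have hRk : (0:ℝ) < 2 ^ k * r := by positivity
  have hRk1 : (0:ℝ) < 2 ^ (k + 1) * r := by positivity
  have hsub : Metric.ball w (2 ^ k * r) ⊆ Metric.ball w (2 ^ (k + 1) * r) := by
    apply Metric.ball_subset_ball
    have h1 : (2:ℝ) ^ (k + 1) = 2 ^ k * 2 := pow_succ 2 k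
    nlinarith [pow_pos (by norm_num : (0:ℝ) < 2) k]
  apply isAtom1_smul n w hRk1 _ hc
  · intro p hp
    rw [nInd_zero w _ hp, nInd_zero w _ (fun h => hp (hsub h)), sub_zero, mul_zero]
  · exact ((nInd_integrable n w _).sub (nInd_integrable n w _)).const_mul s
  · rw [integral_const_mul, integral_sub (nInd_integrable n w _) (nInd_integrable n w _),
      nInd_integral w hRk, nInd_integral w hRk1, sub_self, mul_zero]
  · intro p
    have hA : (0:ℝ) < (2 ^ k * r) ^ n := pow_pos hRk n
    have hE : ((2:ℝ) ^ (k + 1) * r) ^ n = 2 ^ n * (2 ^ k * r) ^ n := by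
      rw [pow_succ]
      ring
    have h1 := nInd_abs_le w hRk p
    have h2 := nInd_abs_le w hRk1 p
    rw [hE] at h2 ⊢
    have h2' : |nInd n w (2 ^ (k + 1) * r) p| ≤ ((2 ^ k * r) ^ n * volb n)⁻¹ := by
      refine le_trans h2 ?_
      have h2n : (1:ℝ) ≤ 2 ^ n := one_le_pow₀ one_le_two
      apply inv_anti₀ (by positivity)
      nlinarith [mul_pos (pow_pos hRk n) hv]
    exact chain_bound n hA hv hcs h1 h2'

/-- The final bridging atom between the two ball chains. -/
lemma isAtom1_last (n : ℕ) (y z : Rn n) {r : ℝ} (hr : 0 < r) (s : ℝ) {c : ℝ} (hc : 0 < c)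
    (K : ℕ) (hdist : dist y z ≤ 2 ^ K * r)
    (hcs : |s| / volb n * 2 ^ (n + 1) ≤ c) :
    IsAtom1 n (fun x => c⁻¹ * (s * (nInd n y (2 ^ K * r) x - nInd n z (2 ^ K * r) x))) := by
  have hv := volb_pos n
  have hRK : (0:ℝ) < 2 ^ K * r := by positivity
  have hRK1 : (0:ℝ) < 2 ^ (K + 1) * r := by positivity
  have hsuby : Metric.ball y (2 ^ K * r) ⊆ Metric.ball y (2 ^ (K + 1) * r) := by
    apply Metric.ball_subset_ball
    have h1 : (2:ℝ) ^ (K + 1) = 2 ^ K * 2 := pow_succ 2 K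
    nlinarith [pow_pos (by norm_num : (0:ℝ) < 2) K]
  have hsubz : Metric.ball z (2 ^ K * r) ⊆ Metric.ball y (2 ^ (K + 1) * r) := by
    intro p hp
    rw [Metric.mem_ball] at hp ⊢
    have h1 : dist p y ≤ dist p z + dist z y := dist_triangle _ _ _
    have h2 : dist z y = dist y z := dist_comm _ _
    have h3 : (2:ℝ) ^ (K + 1) = 2 ^ K * 2 := pow_succ 2 K
    nlinarith
  apply isAtom1_smul n y hRK1 _ hc
  · intro p hp
    rw [nInd_zero y _ (fun h => hp (hsuby h)), nInd_zero z _ (fun h => hp (hsubz h)),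
      sub_zero, mul_zero]
  · exact ((nInd_integrable n y _).sub (nInd_integrable n z _)).const_mul s
  · rw [integral_const_mul, integral_sub (nInd_integrable n y _) (nInd_integrable n z _),
      nInd_integral y hRK, nInd_integral z hRK, sub_self, mul_zero]
  · intro p
    have hA : (0:ℝ) < (2 ^ K * r) ^ n := pow_pos hRK n
    have hE : ((2:ℝ) ^ (K + 1) * r) ^ n = 2 ^ n * (2 ^ K * r) ^ n := by
      rw [pow_succ]
      ring
    rw [hE]
    exact chain_bound n hA hv hcs (nInd_abs_le y hRK p) (nInd_abs_le z hRK p)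

lemma isAtom1_zero' (n : ℕ) (h : Rn n → ℝ) (hzero : ∀ x, h x = 0) : IsAtom1 n h :=
  ⟨0, 1, one_pos, fun p _ => hzero p, by
    have : h = fun _ => 0 := funext hzero
    rw [this]
    exact integrable_zero _ _ _, by
    have : h = fun _ => 0 := funext hzero
    rw [this]
    simp, fun p => by rw [hzero p]; simp⟩

lemma h1_of_rep {n : ℕ} {f : Rn n → ℝ} {l : ℕ → ℝ} {a : ℕ → Rn n → ℝ}
    (h : HardyRep n f l a) : MemH1 n f ∧ H1norm n f ≤ ENNReal.ofReal (∑' i, |l i|) :=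
  ⟨⟨l, a, h⟩, iInf₂_le (l, a) h⟩


end H1AuxLemmas

set_option maxHeartbeats 1000000 in
/-- a mean-zero function bounded by `r^{-n}(χ_{B(y,r)} + χ_{B(z,r)})`
with `|y - z| = Mr` lies in `H¹` with norm `≤ C log M`. -/
theorem h1_log_lemma (n : ℕ) : ∃ C : ℝ, 0 < C ∧
    ∀ (M r : ℝ) (y z : Rn n) (H : Rn n → ℝ),
      2 ≤ M → 0 < r → dist y z = M * r →
      MeasureTheory.Integrable H (volume : Measure (Rn n)) →
      (∫ x, H x) = 0 →
      (∀ x, |H x| ≤ (1 / r ^ n) *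
        ((Metric.ball y r).indicator (fun _ => (1 : ℝ)) x +
          (Metric.ball z r).indicator (fun _ => (1 : ℝ)) x)) →
      MemH1 n H ∧ H1norm n H ≤ ENNReal.ofReal (C * Real.log M) := by
  have hv := volb_pos n
  have hlog2 : (0:ℝ) < Real.log 2 := Real.log_pos one_lt_two
  refine ⟨9 * 2 ^ (n + 2) / Real.log 2, by positivity, ?_⟩
  intro M r y z H hM hr hdist hint hmean hbd
  have hM0 : (0:ℝ) < M := by linarith
  have hrn : (0:ℝ) < r ^ n := pow_pos hr n
  have h20 : (2:ℝ) ^ (0:ℕ) * r = r := by norm_num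
  -- disjointness of the two balls
  have hdisj : ∀ x : Rn n, x ∈ Metric.ball y r → x ∈ Metric.ball z r → False := by
    intro x hxy hxz
    rw [Metric.mem_ball] at hxy hxz
    have h1 : dist y z ≤ dist y x + dist x z := dist_triangle y x z
    rw [dist_comm y x] at h1
    have h2 : M * r ≤ dist x y + dist x z := hdist ▸ h1
    have h3 : 2 * r ≤ M * r := mul_le_mul_of_nonneg_right hM hr.le
    linarith
  -- pointwise bounds
  have hHy : ∀ x, x ∈ Metric.ball y r → |H x| ≤ 1 / r ^ n := by
    intro x hx
    have h := hbd x
    rw [Set.indicator_of_mem hx, Set.indicator_of_notMem (fun h' => hdisj x hx h')] at h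
    calc |H x| ≤ 1 / r ^ n * (1 + 0) := h
      _ = 1 / r ^ n := by ring
  have hHz : ∀ x, x ∈ Metric.ball z r → |H x| ≤ 1 / r ^ n := by
    intro x hx
    have h := hbd x
    rw [Set.indicator_of_mem hx, Set.indicator_of_notMem (fun h' => hdisj x h' hx)] at h
    calc |H x| ≤ 1 / r ^ n * (0 + 1) := h
      _ = 1 / r ^ n := by ring
  have hH0 : ∀ x, x ∉ Metric.ball y r → x ∉ Metric.ball z r → H x = 0 := by
    intro x hx hz
    have h := hbd x
    rw [Set.indicator_of_notMem hx, Set.indicator_of_notMem hz] at h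
    have h' : |H x| ≤ 0 := by
      calc |H x| ≤ 1 / r ^ n * (0 + 0) := h
        _ = 0 := by ring
    exact abs_nonpos_iff.1 h'
  -- splitting H
  set H₁ : Rn n → ℝ := (Metric.ball y r).indicator H with hH₁
  set H₂ : Rn n → ℝ := (Metric.ball z r).indicator H with hH₂
  set s : ℝ := ∫ x in Metric.ball y r, H x with hs
  have hH1int : Integrable H₁ := hint.indicator measurableSet_ball
  have hH2int : Integrable H₂ := hint.indicator measurableSet_ball
  have hH1supp : ∀ p, p ∉ Metric.ball y r → H₁ p = 0 := fun p hp =>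
    Set.indicator_of_notMem hp H
  have hH2supp : ∀ p, p ∉ Metric.ball z r → H₂ p = 0 := fun p hp =>
    Set.indicator_of_notMem hp H
  have hH1bd : ∀ p, |H₁ p| ≤ 1 / r ^ n := by
    intro p
    by_cases hp : p ∈ Metric.ball y r
    · rw [hH₁, Set.indicator_of_mem hp]
      exact hHy p hp
    · rw [hH₁, Set.indicator_of_notMem hp, abs_zero]
      positivity
  have hH2bd : ∀ p, |H₂ p| ≤ 1 / r ^ n := by
    intro p
    by_cases hp : p ∈ Metric.ball z r
    · rw [hH₂, Set.indicator_of_mem hp]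
      exact hHz p hp
    · rw [hH₂, Set.indicator_of_notMem hp, abs_zero]
      positivity
  have hsplit : ∀ x, H x = H₁ x + H₂ x := by
    intro x
    by_cases hx : x ∈ Metric.ball y r
    · rw [hH₁, hH₂, Set.indicator_of_mem hx,
        Set.indicator_of_notMem (fun h' => hdisj x hx h'), add_zero]
    · by_cases hz : x ∈ Metric.ball z r
      · rw [hH₁, hH₂, Set.indicator_of_notMem hx, Set.indicator_of_mem hz, zero_add]
      · rw [hH₁, hH₂, Set.indicator_of_notMem hx, Set.indicator_of_notMem hz,
          hH0 x hx hz, add_zero]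
  have hH1mean : ∫ p, H₁ p = s := by
    rw [hH₁, integral_indicator measurableSet_ball]
  have hH2mean : ∫ p, H₂ p = -s := by
    have h1 : ∫ p, (H₁ p + H₂ p) = (∫ p, H₁ p) + ∫ p, H₂ p := integral_add hH1int hH2int
    have h2 : ∫ p, (H₁ p + H₂ p) = ∫ p, H p :=
      integral_congr_ae (Filter.Eventually.of_forall fun p => (hsplit p).symm)
    rw [hmean] at h2
    rw [hH1mean] at h1
    linarith
  have hsabs : |s| ≤ volb n := by
    have h1 : ‖∫ x in Metric.ball y r, H x‖ ≤ 1 / r ^ n * (volume (Metric.ball y r)).toReal :=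
      norm_setIntegral_le_of_norm_le_const measure_ball_lt_top
        (fun x hx => by rw [Real.norm_eq_abs]; exact hHy x hx)
    rw [Real.norm_eq_abs, vol_ball y hr] at h1
    calc |s| ≤ 1 / r ^ n * (r ^ n * volb n) := h1
      _ = volb n := by field_simp
  -- the number of chain steps
  set L : ℝ := Real.logb 2 M with hL
  have hL1 : 1 ≤ L := by
    rw [hL]
    calc (1:ℝ) = Real.logb 2 2 := (Real.logb_self_eq_one one_lt_two).symm
      _ ≤ Real.logb 2 M := (Real.logb_le_logb one_lt_two two_pos hM0).2 hM
  set K : ℕ := ⌈Real.logb 2 (M + 1)⌉₊ with hK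
  have hlnn : 0 ≤ Real.logb 2 (M + 1) := Real.logb_nonneg one_lt_two (by linarith)
  have hK1 : M + 1 ≤ 2 ^ K := by
    have h1 : Real.logb 2 (M + 1) ≤ (K:ℝ) := Nat.le_ceil _
    have h2 : (2:ℝ) ^ Real.logb 2 (M + 1) ≤ (2:ℝ) ^ (K:ℝ) :=
      Real.rpow_le_rpow_of_exponent_le one_le_two h1
    rw [Real.rpow_logb (by norm_num) (by norm_num) (by linarith), Real.rpow_natCast] at h2
    exact h2
  have hMK : M ≤ 2 ^ K := by linarith
  have hK2 : (K:ℝ) ≤ 2 * L + 1 := by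
    have h1 : (K:ℝ) < Real.logb 2 (M + 1) + 1 := Nat.ceil_lt_add_one hlnn
    have h2 : Real.logb 2 (M + 1) ≤ Real.logb 2 (M * M) :=
      (Real.logb_le_logb one_lt_two (by linarith) (by positivity)).2 (by nlinarith)
    have h3 : Real.logb 2 (M * M) = L + L := by
      rw [hL, Real.logb_mul hM0.ne' hM0.ne']
    linarith
  -- the uniform coefficient
  set c : ℝ := (1 + |s| / volb n) * 2 ^ (n + 1) with hc
  have hq0 : (0:ℝ) ≤ |s| / volb n := div_nonneg (abs_nonneg s) hv.le
  have hc0 : 0 < c := by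
    rw [hc]
    have : (0:ℝ) < 2 ^ (n + 1) := by positivity
    nlinarith
  have hc2 : c ≤ 2 ^ (n + 2) := by
    have hq : |s| / volb n ≤ 1 := (div_le_one hv).2 hsabs
    have h1 : (0:ℝ) < 2 ^ (n + 1) := by positivity
    have e : (2:ℝ) ^ (n + 2) = 2 * 2 ^ (n + 1) := by ring
    rw [hc, e]
    nlinarith
  have hedge : 1 + |s| / volb n ≤ c := by
    have h1 : (1:ℝ) ≤ 2 ^ (n + 1) := one_le_pow₀ one_le_two
    rw [hc]
    nlinarith
  have hedge' : 1 + |(-s)| / volb n ≤ c := by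
    rw [abs_neg]
    exact hedge
  have hchain : |s| / volb n * 2 ^ (n + 1) ≤ c := by
    have h1 : (0:ℝ) < 2 ^ (n + 1) := by positivity
    rw [hc]
    nlinarith
  -- the pieces
  set g : ℕ → Rn n → ℝ := fun i =>
    if i = 0 then (fun x => H₁ x - s * nInd n y (2 ^ (0:ℕ) * r) x)
    else if i = 1 then (fun x => H₂ x - (-s) * nInd n z (2 ^ (0:ℕ) * r) x)
    else if i ≤ K + 1 then
      (fun x => s * (nInd n y (2 ^ (i - 2) * r) x - nInd n y (2 ^ (i - 2 + 1) * r) x))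
    else if i ≤ 2 * K + 1 then
      (fun x => -(s * (nInd n z (2 ^ (i - K - 2) * r) x - nInd n z (2 ^ (i - K - 2 + 1) * r) x)))
    else if i = 2 * K + 2 then (fun x => s * (nInd n y (2 ^ K * r) x - nInd n z (2 ^ K * r) x))
    else 0
    with hg
  set l : ℕ → ℝ := fun i => if i ≤ 2 * K + 2 then c else 0 with hl
  set a : ℕ → Rn n → ℝ := fun i => fun x => c⁻¹ * g i x with ha
  have hg_off : ∀ i, 2 * K + 2 < i → g i = 0 := by
    intro i hi
    simp only [hg]
    rw [if_neg (by omega), if_neg (by omega), if_neg (by omega), if_neg (by omega),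
      if_neg (by omega)]
  -- each piece is an atom after rescaling
  have hr0 : (0:ℝ) < 2 ^ (0:ℕ) * r := by rw [h20]; exact hr
  have hatom : ∀ i, IsAtom1 n (a i) := by
    intro i
    by_cases h0 : i = 0
    · subst h0
      have e : g 0 = (fun x => H₁ x - s * nInd n y (2 ^ (0:ℕ) * r) x) := by
        simp only [hg]
        norm_num
      have e' : a 0 = fun x => c⁻¹ * (H₁ x - s * nInd n y (2 ^ (0:ℕ) * r) x) := by
        simp only [ha, e]
      rw [e']
      apply isAtom1_edge n y hr0 H₁ s hc0 hH1int
        (fun p hp => hH1supp p (by rwa [h20] at hp))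
        (fun p => by rw [h20]; exact hH1bd p) hH1mean
      exact hedge
    by_cases h1 : i = 1
    · subst h1
      have e : g 1 = (fun x => H₂ x - (-s) * nInd n z (2 ^ (0:ℕ) * r) x) := by
        simp only [hg]
        norm_num
      have e' : a 1 = fun x => c⁻¹ * (H₂ x - (-s) * nInd n z (2 ^ (0:ℕ) * r) x) := by
        simp only [ha, e]
      rw [e']
      apply isAtom1_edge n z hr0 H₂ (-s) hc0 hH2int
        (fun p hp => hH2supp p (by rwa [h20] at hp))
        (fun p => by rw [h20]; exact hH2bd p) hH2mean
      exact hedge'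
    by_cases h2 : i ≤ K + 1
    · have e : g i = (fun x => s * (nInd n y (2 ^ (i - 2) * r) x
          - nInd n y (2 ^ (i - 2 + 1) * r) x)) := by
        simp only [hg]
        rw [if_neg h0, if_neg h1, if_pos h2]
      have e' : a i = fun x => c⁻¹ * (s * (nInd n y (2 ^ (i - 2) * r) x
          - nInd n y (2 ^ (i - 2 + 1) * r) x)) := by
        simp only [ha, e]
      rw [e']
      exact isAtom1_chain n y hr s hc0 hchain (i - 2)
    by_cases h3 : i ≤ 2 * K + 1
    · have e : g i = (fun x => -(s * (nInd n z (2 ^ (i - K - 2) * r) x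
          - nInd n z (2 ^ (i - K - 2 + 1) * r) x))) := by
        simp only [hg]
        rw [if_neg h0, if_neg h1, if_neg h2, if_pos h3]
      have e' : a i = fun x => -(c⁻¹ * (s * (nInd n z (2 ^ (i - K - 2) * r) x
          - nInd n z (2 ^ (i - K - 2 + 1) * r) x))) := by
        simp only [ha, e]
        funext x
        ring
      rw [e']
      exact isAtom1_neg (isAtom1_chain n z hr s hc0 hchain (i - K - 2))
    by_cases h4 : i = 2 * K + 2
    · subst h4
      have e : g (2 * K + 2) = (fun x => s * (nInd n y (2 ^ K * r) x
          - nInd n z (2 ^ K * r) x)) := by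
        simp only [hg]
        rw [if_neg h0, if_neg h1, if_neg h2, if_neg h3]
        norm_num
      have e' : a (2 * K + 2) = fun x => c⁻¹ * (s * (nInd n y (2 ^ K * r) x
          - nInd n z (2 ^ K * r) x)) := by
        simp only [ha, e]
      rw [e']
      apply isAtom1_last n y z hr s hc0 K _ hchain
      rw [hdist]
      nlinarith
    · have e : g i = 0 := hg_off i (by omega)
      apply isAtom1_zero' n (a i)
      intro x
      simp only [ha, e]
      simp
  -- the representation sums to H
  have hlag : ∀ x i, l i * a i x = g i x := by
    intro x i
    by_cases hi : i ≤ 2 * K + 2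
    · simp only [hl, ha]
      rw [if_pos hi, ← mul_assoc, mul_inv_cancel₀ hc0.ne', one_mul]
    · simp only [hl, ha]
      rw [if_neg hi, zero_mul, hg_off i (by omega)]
      simp
  have hsum : ∀ x, ∑ i ∈ Finset.range (2 * K + 3), g i x = H x := by
    intro x
    have hsplit2 : 2 * K + 3 = 2 + K + K + 1 := by ring
    rw [hsplit2, Finset.sum_range_succ, Finset.sum_range_add, Finset.sum_range_add,
      Finset.sum_range_succ, Finset.sum_range_one]
    have e0 : g 0 x = H₁ x - s * nInd n y (2 ^ (0:ℕ) * r) x := by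
      simp only [hg]
      norm_num
    have e1 : g 1 x = H₂ x - (-s) * nInd n z (2 ^ (0:ℕ) * r) x := by
      simp only [hg]
      norm_num
    have e2 : ∀ i ∈ Finset.range K, g (2 + i) x
        = s * (nInd n y (2 ^ i * r) x - nInd n y (2 ^ (i + 1) * r) x) := by
      intro i hi
      rw [Finset.mem_range] at hi
      simp only [hg]
      rw [if_neg (by omega), if_neg (by omega), if_pos (by omega)]
      simp only [show 2 + i - 2 = i from by omega]
    have e3 : ∀ i ∈ Finset.range K, g (2 + K + i) x
        = -(s * (nInd n z (2 ^ i * r) x - nInd n z (2 ^ (i + 1) * r) x)) := by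
      intro i hi
      rw [Finset.mem_range] at hi
      simp only [hg]
      rw [if_neg (by omega), if_neg (by omega), if_neg (by omega), if_pos (by omega)]
      simp only [show 2 + K + i - K - 2 = i from by omega]
    have e4 : g (2 + K + K) x = s * (nInd n y (2 ^ K * r) x - nInd n z (2 ^ K * r) x) := by
      simp only [hg]
      rw [if_neg (by omega), if_neg (by omega), if_neg (by omega), if_neg (by omega),
        if_pos (by omega)]
    have T1 : ∑ i ∈ Finset.range K, g (2 + i) x
        = s * (nInd n y (2 ^ (0:ℕ) * r) x - nInd n y (2 ^ K * r) x) := by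
      rw [Finset.sum_congr rfl e2, ← Finset.mul_sum,
        show (∑ i ∈ Finset.range K, (nInd n y (2 ^ i * r) x - nInd n y (2 ^ (i + 1) * r) x))
          = nInd n y (2 ^ (0:ℕ) * r) x - nInd n y (2 ^ K * r) x from
          Finset.sum_range_sub' (fun k => nInd n y (2 ^ k * r) x) K]
    have T2 : ∑ i ∈ Finset.range K, g (2 + K + i) x
        = -(s * (nInd n z (2 ^ (0:ℕ) * r) x - nInd n z (2 ^ K * r) x)) := by
      rw [Finset.sum_congr rfl e3, Finset.sum_neg_distrib, ← Finset.mul_sum,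
        show (∑ i ∈ Finset.range K, (nInd n z (2 ^ i * r) x - nInd n z (2 ^ (i + 1) * r) x))
          = nInd n z (2 ^ (0:ℕ) * r) x - nInd n z (2 ^ K * r) x from
          Finset.sum_range_sub' (fun k => nInd n z (2 ^ k * r) x) K]
    rw [e0, e1, e4, T1, T2, hsplit x]
    ring
  have hloff : ∀ i ∉ Finset.range (2 * K + 3), |l i| = 0 := by
    intro i hi
    rw [Finset.mem_range, not_lt] at hi
    simp only [hl]
    rw [if_neg (by omega)]
    exact abs_zero
  have hrep : HardyRep n H l a := by
    refine ⟨hatom, summable_of_ne_finset_zero hloff, Filter.Eventually.of_forall fun x => ?_⟩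
    have h0 : ∀ i ∉ Finset.range (2 * K + 3), l i * a i x = 0 := by
      intro i hi
      rw [Finset.mem_range, not_lt] at hi
      simp only [hl]
      rw [if_neg (by omega), zero_mul]
    have hs' : ∑ i ∈ Finset.range (2 * K + 3), l i * a i x = H x := by
      rw [Finset.sum_congr rfl fun i _ => hlag x i, hsum x]
    rw [← hs']
    exact hasSum_sum_of_ne_finset_zero h0
  have htsum : ∑' i, |l i| = ((2 * K + 3 : ℕ) : ℝ) * c := by
    rw [tsum_eq_sum hloff]
    have hcon : ∀ i ∈ Finset.range (2 * K + 3), |l i| = c := by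
      intro i hi
      rw [Finset.mem_range] at hi
      simp only [hl]
      rw [if_pos (by omega)]
      exact abs_of_pos hc0
    rw [Finset.sum_congr rfl hcon, Finset.sum_const, Finset.card_range, nsmul_eq_mul]
  obtain ⟨hmem, hnorm⟩ := h1_of_rep hrep
  refine ⟨hmem, le_trans hnorm ?_⟩
  rw [htsum]
  apply ENNReal.ofReal_le_ofReal
  have hcast : ((2 * K + 3 : ℕ) : ℝ) = 2 * (K:ℝ) + 3 := by push_cast; ring
  have hLM : L = Real.log M / Real.log 2 := by rw [hL, Real.logb]
  have h1 : 2 * (K:ℝ) + 3 ≤ 9 * L := by linarith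
  have h2 : ((2 * K + 3 : ℕ) : ℝ) * c ≤ 9 * L * 2 ^ (n + 2) := by
    rw [hcast]
    have h9 : (0:ℝ) ≤ 9 * L := by linarith
    nlinarith
  have h3 : 9 * L * 2 ^ (n + 2) = 9 * 2 ^ (n + 2) / Real.log 2 * Real.log M := by
    rw [hLM]
    field_simp
  linarith
end
end

section
/- Let b ∈ L¹_loc(ℝⁿ). Then b ∈ BMO(ℝⁿ) with ‖b‖_{BMO} ≤ C·S if and only if there exists S < ∞ such that |∫_{ℝⁿ} b(x) a(x) dx| ≤ S for every H¹-atom a; i.e., the BMO norm is comparable to sup over atoms a of |⟨b, a⟩|. -/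
open MeasureTheory ENNReal Filter Topology

noncomputable section

lemma mul_sign_self (x : ℝ) : x * Real.sign x = |x| := by
  rcases lt_trichotomy x 0 with h|h|h
  · rw [Real.sign_of_neg h, abs_of_neg h]; ring
  · simp [h]
  · rw [Real.sign_of_pos h, abs_of_pos h]; ring

lemma Real_sign_measurable : Measurable Real.sign := by
  have : Real.sign = fun x : ℝ => if x < 0 then (-1:ℝ) else if 0 < x then 1 else 0 := by
    funext x; rcases lt_trichotomy x 0 with h|h|h
    · simp [Real.sign_of_neg h, h, not_lt.2 h.le]
    · simp [h, Real.sign_zero]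
    · simp [Real.sign_of_pos h, h, not_lt.2 h.le]
  rw [this]
  exact measurable_const.ite (measurableSet_lt measurable_id measurable_const)
    (measurable_const.ite (measurableSet_lt measurable_const measurable_id) measurable_const)

lemma abs_sign_le (x : ℝ) : |Real.sign x| ≤ 1 := by
  rcases Real.sign_apply_eq x with h|h|h <;> simp [h]

lemma ball_vol (n : ℕ) (c : Rn n) {r : ℝ} (hr : 0 < r) :
    volume (Metric.ball c r) = ENNReal.ofReal (r ^ n) * volume (Metric.ball (0 : Rn n) 1) := by
  cases n with
  | zero =>
      have h1 : Metric.ball c r = Set.univ := Set.eq_univ_of_forall fun y => by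
        simp [Metric.mem_ball, Subsingleton.elim y c, hr]
      have h2 : Metric.ball (0 : Rn 0) 1 = Set.univ := Set.eq_univ_of_forall fun y => by
        simp [Metric.mem_ball, Subsingleton.elim y (0 : Rn 0)]
      rw [h1, h2]; simp [MeasureTheory.volume_pi, MeasureTheory.Measure.pi_univ]
  | succ m =>
      have := Measure.addHaar_ball (volume : Measure (Rn (m+1))) c hr.le
      simpa [Module.finrank_fintype_fun_eq_card] using this

/-- `b ∈ BMO` with `‖b‖_{BMO} ≤ CS` iff `|∫ b a| ≤ S` uniformly
over all `H¹`-atoms `a`: the BMO seminorm is comparable to the sup of pairings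
with atoms. -/
theorem bmo_atom_duality (n : ℕ) : ∃ C : ℝ, 0 < C ∧
    ∀ b : Rn n → ℝ,
      MeasureTheory.LocallyIntegrable b (volume : Measure (Rn n)) →
      ∀ S : ℝ, 0 ≤ S →
      ((∀ a : Rn n → ℝ, IsAtom1 n a → |∫ x, b x * a x| ≤ S) →
        ∀ (c : Rn n) (r : ℝ), 0 < r →
          (volume (Metric.ball c r)).toReal⁻¹ *
              ∫ x in Metric.ball c r,
                |b x - (volume (Metric.ball c r)).toReal⁻¹ *
                  ∫ z in Metric.ball c r, b z| ≤ C * S) ∧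
      ((∀ (c : Rn n) (r : ℝ), 0 < r →
          (volume (Metric.ball c r)).toReal⁻¹ *
              ∫ x in Metric.ball c r,
                |b x - (volume (Metric.ball c r)).toReal⁻¹ *
                  ∫ z in Metric.ball c r, b z| ≤ S) →
        ∀ a : Rn n → ℝ, IsAtom1 n a → |∫ x, b x * a x| ≤ C * S) := by
  have hω_pos : 0 < (volume (Metric.ball (0 : Rn n) 1)).toReal :=
    ENNReal.toReal_pos (Metric.measure_ball_pos _ _ one_pos).ne' measure_ball_lt_top.ne
  set ω : ℝ := (volume (Metric.ball (0 : Rn n) 1)).toReal with hω_def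
  refine ⟨2 / ω + ω, by positivity, ?_⟩
  intro b hb S hS
  constructor
  · -- atoms → BMO
    intro hpair c r hr
    set B := Metric.ball c r with hB_def
    have hBm : MeasurableSet B := measurableSet_ball
    have hBfin : volume B < ⊤ := measure_ball_lt_top
    have hAval : (volume B).toReal = r ^ n * ω := by
      rw [hB_def, ball_vol n c hr, ENNReal.toReal_mul,
        ENNReal.toReal_ofReal (pow_nonneg hr.le n)]
    set A : ℝ := (volume B).toReal with hA_def
    have hA_pos : 0 < A := by rw [hAval]; positivity
    have hbI : IntegrableOn b B volume :=
      (hb.integrableOn_isCompact (isCompact_closedBall c r)).mono_set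
        Metric.ball_subset_closedBall
    set bB : ℝ := A⁻¹ * ∫ z in B, b z with hbB_def
    set s : Rn n → ℝ := fun x => Real.sign (b x - bB) with hs_def
    have hs_meas : AEStronglyMeasurable s volume := by
      have : AEMeasurable (fun x => b x - bB) volume :=
        hb.aestronglyMeasurable.aemeasurable.sub aemeasurable_const
      exact (Measurable.comp_aemeasurable Real_sign_measurable this).aestronglyMeasurable
    have hs_bd : ∀ x, |s x| ≤ 1 := fun x => abs_sign_le _
    have hconstI : ∀ t : ℝ, IntegrableOn (fun _ => t) B volume := fun t =>
      integrableOn_const hBfin.ne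
    have hsI : IntegrableOn s B volume :=
      Integrable.mono' (hconstI 1) hs_meas.restrict
        (Filter.Eventually.of_forall fun x => by
          rw [Real.norm_eq_abs]; exact hs_bd x)
    set m : ℝ := A⁻¹ * ∫ x in B, s x with hm_def
    have hsint : ∫ x in B, |s x| ≤ A := by
      calc ∫ x in B, |s x| ≤ ∫ x in B, (1 : ℝ) :=
            integral_mono hsI.abs (hconstI 1) fun x => by
              simpa using hs_bd x
        _ = A := by simp [setIntegral_const, hA_def, measureReal_def]
    have hm_bd : |m| ≤ 1 := by
      rw [hm_def, abs_mul, abs_of_nonneg (inv_nonneg.2 hA_pos.le)]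
      have h1 : |∫ x in B, s x| ≤ ∫ x in B, |s x| := by
        simpa [Real.norm_eq_abs] using
          norm_integral_le_integral_norm (μ := volume.restrict B) s
      calc A⁻¹ * |∫ x in B, s x| ≤ A⁻¹ * A :=
            mul_le_mul_of_nonneg_left (h1.trans hsint) (inv_nonneg.2 hA_pos.le)
        _ = 1 := inv_mul_cancel₀ hA_pos.ne'
    have hsm_I : IntegrableOn (fun x => s x - m) B volume := hsI.sub (hconstI m)
    have hs0 : ∫ x in B, (s x - m) = 0 := by
      rw [integral_sub hsI (hconstI m), setIntegral_const, smul_eq_mul,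
        measureReal_def, ← hA_def, hm_def, ← mul_assoc, mul_inv_cancel₀ hA_pos.ne', one_mul,
        sub_self]
    have hb0 : ∫ x in B, (b x - bB) = 0 := by
      rw [integral_sub hbI (hconstI bB), setIntegral_const, smul_eq_mul,
        measureReal_def, ← hA_def, hbB_def, ← mul_assoc, mul_inv_cancel₀ hA_pos.ne', one_mul,
        sub_self]
    have hrn_pos : (0:ℝ) < r ^ n := pow_pos hr n
    set a : Rn n → ℝ := B.indicator (fun x => (s x - m) / (2 * r ^ n)) with ha_def
    have ha_atom : IsAtom1 n a := by
      refine ⟨c, r, hr, fun y hy => Set.indicator_of_notMem hy _, ?_, ?_, ?_⟩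
      · exact MeasureTheory.IntegrableOn.integrable_indicator
          (hsm_I.div_const _) hBm
      · rw [ha_def, integral_indicator hBm, integral_div, hs0, zero_div]
      · intro y
        by_cases hy : y ∈ B
        · rw [ha_def, Set.indicator_of_mem hy, abs_div,
            abs_of_pos (by positivity : (0:ℝ) < 2 * r ^ n)]
          rw [div_le_div_iff₀ (by positivity) hrn_pos]
          have : |s y - m| ≤ 2 := by
            calc |s y - m| ≤ |s y| + |m| := abs_sub _ _
              _ ≤ 1 + 1 := add_le_add (hs_bd y) hm_bd
              _ = 2 := by norm_num
          nlinarith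
        · rw [ha_def, Set.indicator_of_notMem hy]
          simp
          positivity
    have key0 : (fun x => b x * a x) =
        B.indicator (fun x => b x * (s x - m) / (2 * r ^ n)) := by
      funext x
      by_cases hx : x ∈ B
      · rw [ha_def, Set.indicator_of_mem hx, Set.indicator_of_mem hx]; ring
      · rw [ha_def, Set.indicator_of_notMem hx, Set.indicator_of_notMem hx,
          mul_zero]
    have hb_sm_I : IntegrableOn (fun x => b x * (s x - m)) B volume := by
      have h := hbI.bdd_mul (hs_meas.restrict.sub aestronglyMeasurable_const)
        (c := 1 + |m|) (Filter.Eventually.of_forall fun x => by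
          rw [Real.norm_eq_abs]
          exact (abs_sub _ _).trans (add_le_add (hs_bd x) le_rfl))
      exact h.congr (Filter.Eventually.of_forall fun x => mul_comm _ _)
    have habsI : IntegrableOn (fun x => |b x - bB|) B volume :=
      (hbI.sub (hconstI bB)).abs
    have key : ∫ x in B, b x * (s x - m) = ∫ x in B, |b x - bB| := by
      have e1 : (fun x => b x * (s x - m)) =
          fun x => |b x - bB| - m * (b x - bB) + bB * (s x - m) := by
        funext x
        rw [← mul_sign_self (b x - bB)]
        show b x * (s x - m) = (b x - bB) * s x - m * (b x - bB) + bB * (s x - m)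
        ring
      have hI1 : IntegrableOn (fun x => |b x - bB| - m * (b x - bB)) B volume :=
        habsI.sub ((hbI.sub (hconstI bB)).const_mul m)
      have hI2 : IntegrableOn (fun x => bB * (s x - m)) B volume :=
        hsm_I.const_mul bB
      have hI3 : IntegrableOn (fun x => m * (b x - bB)) B volume :=
        (hbI.sub (hconstI bB)).const_mul m
      rw [e1, integral_add hI1 hI2,
        integral_sub habsI hI3,
        integral_const_mul, integral_const_mul, hb0, hs0]
      ring
    have hpaired := hpair a ha_atom
    have hval : ∫ x, b x * a x = (∫ x in B, |b x - bB|) / (2 * r ^ n) := by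
      rw [key0, integral_indicator hBm]
      rw [show (fun x => b x * (s x - m) / (2 * r ^ n)) =
        fun x => (b x * (s x - m)) / (2 * r ^ n) from rfl, integral_div, key]
    have habs_nonneg : 0 ≤ ∫ x in B, |b x - bB| :=
      integral_nonneg fun x => abs_nonneg _
    have hfin : ∫ x in B, |b x - bB| ≤ 2 * r ^ n * S := by
      have h2 : |∫ x, b x * a x| = (∫ x in B, |b x - bB|) / (2 * r ^ n) := by
        rw [hval, abs_of_nonneg (by positivity)]
      rw [h2] at hpaired
      rw [div_le_iff₀ (by positivity : (0:ℝ) < 2 * r ^ n)] at hpaired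
      linarith [hpaired]
    calc A⁻¹ * ∫ x in B, |b x - bB| ≤ A⁻¹ * (2 * r ^ n * S) :=
          mul_le_mul_of_nonneg_left hfin (inv_nonneg.2 hA_pos.le)
      _ = 2 / ω * S := by
          rw [hAval]; field_simp
      _ ≤ (2 / ω + ω) * S := by nlinarith
  · -- BMO → atoms
    intro hbmo a ha
    obtain ⟨x, ρ, hρ, hsupp, hint, hmean, hbd⟩ := ha
    set B := Metric.ball x ρ with hB_def
    have hBm : MeasurableSet B := measurableSet_ball
    have hBfin : volume B < ⊤ := measure_ball_lt_top
    have hAval : (volume B).toReal = ρ ^ n * ω := by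
      rw [hB_def, ball_vol n x hρ, ENNReal.toReal_mul,
        ENNReal.toReal_ofReal (pow_nonneg hρ.le n)]
    set A : ℝ := (volume B).toReal with hA_def
    have hA_pos : 0 < A := by rw [hAval]; positivity
    have hbI : IntegrableOn b B volume :=
      (hb.integrableOn_isCompact (isCompact_closedBall x ρ)).mono_set
        Metric.ball_subset_closedBall
    set bB : ℝ := A⁻¹ * ∫ z in B, b z with hbB_def
    have hconstI : ∀ t : ℝ, IntegrableOn (fun _ => t) B volume := fun t =>
      integrableOn_const hBfin.ne
    have hbaI : IntegrableOn (fun y => b y * a y) B volume := by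
      have h := hbI.bdd_mul hint.aestronglyMeasurable.restrict
        (c := 1 / ρ ^ n) (Filter.Eventually.of_forall fun y => by rw [Real.norm_eq_abs]; exact hbd y)
      exact h.congr (Filter.Eventually.of_forall fun y => mul_comm _ _)
    have hρn_pos : (0:ℝ) < ρ ^ n := pow_pos hρ n
    have step1 : ∫ y, b y * a y = ∫ y in B, b y * a y :=
      (setIntegral_eq_integral_of_forall_compl_eq_zero fun y hy => by
        rw [hsupp y hy, mul_zero]).symm
    have hint_a0 : ∫ y in B, a y = 0 := by
      rw [setIntegral_eq_integral_of_forall_compl_eq_zero fun y hy => hsupp y hy,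
        hmean]
    have step2 : ∫ y in B, b y * a y = ∫ y in B, (b y - bB) * a y := by
      have e : (fun y => (b y - bB) * a y) = fun y => b y * a y - bB * a y := by
        funext y; ring
      rw [e, integral_sub hbaI ((hint.restrict).const_mul bB),
        integral_const_mul, hint_a0, mul_zero, sub_zero]
    have step3 : |∫ y in B, (b y - bB) * a y| ≤
        (1 / ρ ^ n) * ∫ y in B, |b y - bB| := by
      have h1 : |∫ y in B, (b y - bB) * a y| ≤ ∫ y in B, |(b y - bB) * a y| := by
        have := norm_integral_le_integral_norm (μ := volume.restrict B)
          (fun y => (b y - bB) * a y)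
        simpa only [Real.norm_eq_abs] using this
      have h2 : ∫ y in B, |(b y - bB) * a y| ≤ ∫ y in B, |b y - bB| * (1 / ρ ^ n) := by
        refine integral_mono ?_ ?_ fun y => ?_
        · have : IntegrableOn (fun y => (b y - bB) * a y) B volume := by
            have e : (fun y => (b y - bB) * a y) = fun y => b y * a y - bB * a y := by
              funext y; ring
            rw [e]; exact hbaI.sub ((hint.restrict).const_mul bB)
          exact this.abs
        · exact ((hbI.sub (hconstI bB)).abs).mul_const _
        · rw [abs_mul]
          exact mul_le_mul_of_nonneg_left (hbd y) (abs_nonneg _)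
      calc |∫ y in B, (b y - bB) * a y| ≤ ∫ y in B, |b y - bB| * (1 / ρ ^ n) :=
            h1.trans h2
        _ = (1 / ρ ^ n) * ∫ y in B, |b y - bB| := by
            rw [integral_mul_const]; ring
    have hbmoB := hbmo x ρ hρ
    have hosc : ∫ y in B, |b y - bB| ≤ A * S := by
      have := hbmoB
      rw [← hB_def, ← hA_def, ← hbB_def] at this
      have h := mul_le_mul_of_nonneg_left this hA_pos.le
      rwa [← mul_assoc, mul_inv_cancel₀ hA_pos.ne', one_mul] at h
    calc |∫ y, b y * a y| = |∫ y in B, (b y - bB) * a y| := by rw [step1, step2]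
      _ ≤ (1 / ρ ^ n) * ∫ y in B, |b y - bB| := step3
      _ ≤ (1 / ρ ^ n) * (A * S) :=
          mul_le_mul_of_nonneg_left hosc (by positivity)
      _ = ω * S := by rw [hAval]; field_simp
      _ ≤ (2 / ω + ω) * S := by nlinarith [div_nonneg (by norm_num : (0:ℝ) ≤ 2) hω_pos.le, mul_nonneg (div_nonneg (by norm_num : (0:ℝ) ≤ 2) hω_pos.le) hS]
end
end
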